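/- Let T be a bounded linear operator on a complex Hilbert space H. Then w(T)³ ≤ (1/2) min(w(TT*T), w(T²T*), w(T*T²)) + (1/2) ‖T‖³. -/
import Mathlib


open scoped InnerProductSpace

variable {H : Type*} [NormedAddCommGroup H] [InnerProductSpace ℂ H] [CompleteSpace H]

/-- The numerical radius of a bounded linear operator. -/
noncomputable def numRadius (T : H →L[ℂ] H) : ℝ :=
  sSup {r : ℝ | ∃ x : H, ‖x‖ = 1 ∧ r = ‖⟪T x, x⟫_ℂ‖}

lemma numRadius_nonneg (T : H →L[ℂ] H) : 0 ≤ numRadius T := by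
  apply Real.sSup_nonneg
  rintro r ⟨x, hx, rfl⟩
  exact norm_nonneg _

lemma mem_bound (T : H →L[ℂ] H) {x : H} (hx : ‖x‖ = 1) : ‖⟪T x, x⟫_ℂ‖ ≤ ‖T‖ := by
  calc ‖⟪T x, x⟫_ℂ‖ ≤ ‖T x‖ * ‖x‖ := norm_inner_le_norm _ _
    _ ≤ ‖T‖ * ‖x‖ * ‖x‖ := by
        have := T.le_opNorm x
        nlinarith [norm_nonneg x]
    _ = ‖T‖ := by rw [hx]; ring

lemma le_numRadius (T : H →L[ℂ] H) {x : H} (hx : ‖x‖ = 1) :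
    ‖⟪T x, x⟫_ℂ‖ ≤ numRadius T := by
  refine le_csSup ⟨‖T‖, ?_⟩ ⟨x, hx, rfl⟩
  rintro r ⟨y, hy, rfl⟩
  exact mem_bound T hy

lemma numRadius_le (T : H →L[ℂ] H) {c : ℝ} (hc : 0 ≤ c)
    (h : ∀ x : H, ‖x‖ = 1 → ‖⟪T x, x⟫_ℂ‖ ≤ c) : numRadius T ≤ c := by
  apply Real.sSup_le _ hc
  rintro r ⟨x, hx, rfl⟩
  exact h x hx

/-- Buzano's inequality. -/
lemma buzano (a b e : H) (he : ‖e‖ = 1) :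
    ‖⟪a, e⟫_ℂ * ⟪e, b⟫_ℂ‖ ≤ (‖a‖ * ‖b‖ + ‖⟪a, b⟫_ℂ‖) / 2 := by
  set v : H := ((2 : ℂ) * ⟪e, b⟫_ℂ) • e - b with hv_def
  have hee : ⟪e, e⟫_ℂ = 1 := by
    rw [@inner_self_eq_norm_sq_to_K ℂ, he]; norm_num
  have hvv : ⟪v, v⟫_ℂ = ⟪b, b⟫_ℂ := by
    simp only [hv_def, inner_sub_left, inner_sub_right, inner_smul_left, inner_smul_right,
      hee, map_mul, map_ofNat, ← inner_conj_symm b e, starRingEnd_self_apply]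
    ring
  have hv : ‖v‖ = ‖b‖ := by
    have h2 : ‖v‖ ^ 2 = ‖b‖ ^ 2 := by
      rw [← @inner_self_eq_norm_sq ℂ, ← @inner_self_eq_norm_sq ℂ, hvv]
    exact (pow_le_pow_iff_left₀ (norm_nonneg v) (norm_nonneg b) two_ne_zero).mp h2.le |>.antisymm
      ((pow_le_pow_iff_left₀ (norm_nonneg b) (norm_nonneg v) two_ne_zero).mp h2.ge)
  have key : (2 : ℂ) * (⟪a, e⟫_ℂ * ⟪e, b⟫_ℂ) = ⟪a, b⟫_ℂ + ⟪a, v⟫_ℂ := by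
    simp only [hv_def, inner_sub_right, inner_smul_right]
    ring
  have h3 : ‖(2 : ℂ) * (⟪a, e⟫_ℂ * ⟪e, b⟫_ℂ)‖ = 2 * ‖⟪a, e⟫_ℂ * ⟪e, b⟫_ℂ‖ := by
    rw [norm_mul]; norm_num
  have h4 : ‖⟪a, b⟫_ℂ + ⟪a, v⟫_ℂ‖ ≤ ‖⟪a, b⟫_ℂ‖ + ‖a‖ * ‖b‖ := by
    calc ‖⟪a, b⟫_ℂ + ⟪a, v⟫_ℂ‖ ≤ ‖⟪a, b⟫_ℂ‖ + ‖⟪a, v⟫_ℂ‖ := norm_add_le _ _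
      _ ≤ ‖⟪a, b⟫_ℂ‖ + ‖a‖ * ‖v‖ := by gcongr; exact norm_inner_le_norm _ _
      _ = ‖⟪a, b⟫_ℂ‖ + ‖a‖ * ‖b‖ := by rw [hv]
  have h5 : 2 * ‖⟪a, e⟫_ℂ * ⟪e, b⟫_ℂ‖ ≤ ‖⟪a, b⟫_ℂ‖ + ‖a‖ * ‖b‖ := by
    rw [← h3, key]; exact h4
  linarith

lemma norm_inner_self (y : H) : ‖⟪y, y⟫_ℂ‖ = ‖y‖ ^ 2 := by
  rw [@inner_self_eq_norm_sq_to_K ℂ]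
  simp [norm_pow]

set_option maxHeartbeats 1600000 in
theorem cor2 (T : H →L[ℂ] H) :
    (numRadius T) ^ 3 ≤ (1 / 2) * min (numRadius (T * ContinuousLinearMap.adjoint T * T))
      (min (numRadius (T ^ 2 * ContinuousLinearMap.adjoint T)) (numRadius (ContinuousLinearMap.adjoint T * T ^ 2))) + (1 / 2) * ‖T‖ ^ 3 := by
  set S := ContinuousLinearMap.adjoint T with hS
  set B : ℝ := (1 / 2) * min (numRadius (T * S * T))
      (min (numRadius (T ^ 2 * S)) (numRadius (S * T ^ 2))) + (1 / 2) * ‖T‖ ^ 3 with hB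
  have hB0 : 0 ≤ B := by
    have h1 := numRadius_nonneg (T * S * T)
    have h2 := numRadius_nonneg (T ^ 2 * S)
    have h3 := numRadius_nonneg (S * T ^ 2)
    have h4 : (0:ℝ) ≤ ‖T‖ ^ 3 := by positivity
    have h5 : (0:ℝ) ≤ min (numRadius (T * S * T))
        (min (numRadius (T ^ 2 * S)) (numRadius (S * T ^ 2))) := le_min h1 (le_min h2 h3)
    rw [hB]; linarith
  have hSnorm : ‖S‖ = ‖T‖ := LinearIsometryEquiv.norm_map ContinuousLinearMap.adjoint T
  -- pointwise bound
  have main : ∀ x : H, ‖x‖ = 1 → ‖⟪T x, x⟫_ℂ‖ ^ 3 ≤ B := by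
    intro x hx
    have hTx : ‖T x‖ ≤ ‖T‖ := by simpa [hx] using T.le_opNorm x
    have hSx : ‖S x‖ ≤ ‖T‖ := by
      have := S.le_opNorm x
      rwa [hSnorm, hx, mul_one] at this
    have hr1 : ‖⟪T x, x⟫_ℂ‖ ≤ ‖T x‖ := by
      simpa [hx] using norm_inner_le_norm (𝕜 := ℂ) (T x) x
    have hr2 : ‖⟪T x, x⟫_ℂ‖ ≤ ‖S x‖ := by
      have h : ⟪T x, x⟫_ℂ = ⟪x, S x⟫_ℂ := (ContinuousLinearMap.adjoint_inner_right T x x).symm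
      rw [h]
      simpa [hx] using norm_inner_le_norm (𝕜 := ℂ) x (S x)
    have hr0 : 0 ≤ ‖⟪T x, x⟫_ℂ‖ := norm_nonneg _
    have hTSx : ‖(T * S) x‖ ≤ ‖T‖ ^ 2 := by
      calc ‖(T * S) x‖ = ‖T (S x)‖ := rfl
        _ ≤ ‖T‖ * ‖S x‖ := T.le_opNorm _
        _ ≤ ‖T‖ * ‖T‖ := by gcongr
        _ = ‖T‖ ^ 2 := by ring
    have hSTx : ‖(S * T) x‖ ≤ ‖T‖ ^ 2 := by
      calc ‖(S * T) x‖ = ‖S (T x)‖ := rfl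
        _ ≤ ‖S‖ * ‖T x‖ := S.le_opNorm _
        _ ≤ ‖T‖ * ‖T‖ := by rw [hSnorm]; gcongr
        _ = ‖T‖ ^ 2 := by ring
    -- Case 1 : T S T
    have c1 : ‖⟪T x, x⟫_ℂ‖ ^ 3 ≤ (numRadius (T * S * T) + ‖T‖ ^ 3) / 2 := by
      have bz := buzano (T x) ((T * S) x) x hx
      have e1 : ⟪x, (T * S) x⟫_ℂ = ⟪S x, S x⟫_ℂ :=
        (ContinuousLinearMap.adjoint_inner_left T (S x) x).symm
      have e2 : ⟪T x, (T * S) x⟫_ℂ = ⟪(T * S * T) x, x⟫_ℂ := by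
        calc ⟪T x, (T * S) x⟫_ℂ = ⟪T x, T (S x)⟫_ℂ := rfl
          _ = ⟪S (T x), S x⟫_ℂ := (ContinuousLinearMap.adjoint_inner_left T (S x) (T x)).symm
          _ = ⟪T (S (T x)), x⟫_ℂ := ContinuousLinearMap.adjoint_inner_right T (S (T x)) x
          _ = ⟪(T * S * T) x, x⟫_ℂ := rfl
      rw [e1, e2] at bz
      have hnm : ‖⟪T x, x⟫_ℂ * ⟪S x, S x⟫_ℂ‖ = ‖⟪T x, x⟫_ℂ‖ * ‖S x‖ ^ 2 := by
        rw [norm_mul, norm_inner_self]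
      rw [hnm] at bz
      have hw : ‖⟪(T * S * T) x, x⟫_ℂ‖ ≤ numRadius (T * S * T) := le_numRadius _ hx
      calc ‖⟪T x, x⟫_ℂ‖ ^ 3 ≤ ‖⟪T x, x⟫_ℂ‖ * ‖S x‖ ^ 2 := by nlinarith [mul_le_mul hr2 hr2 hr0 (norm_nonneg (S x)), hr0, hr2]
        _ ≤ (‖T x‖ * ‖(T * S) x‖ + ‖⟪(T * S * T) x, x⟫_ℂ‖) / 2 := bz
        _ ≤ (numRadius (T * S * T) + ‖T‖ ^ 3) / 2 := by
            nlinarith [norm_nonneg (T x), norm_nonneg ((T * S) x), norm_nonneg T]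
    -- Case 2 : T^2 S
    have c2 : ‖⟪T x, x⟫_ℂ‖ ^ 3 ≤ (numRadius (T ^ 2 * S) + ‖T‖ ^ 3) / 2 := by
      have bz := buzano ((T * S) x) (S x) x hx
      have e1 : ⟪(T * S) x, x⟫_ℂ = ⟪S x, S x⟫_ℂ := by
        calc ⟪(T * S) x, x⟫_ℂ = ⟪T (S x), x⟫_ℂ := rfl
          _ = ⟪S x, S x⟫_ℂ := by
              rw [← ContinuousLinearMap.adjoint_inner_right T (S x) x]
      have e2 : ⟪(T * S) x, S x⟫_ℂ = ⟪(T ^ 2 * S) x, x⟫_ℂ := by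
        calc ⟪(T * S) x, S x⟫_ℂ = ⟪T (S x), S x⟫_ℂ := rfl
          _ = ⟪T (T (S x)), x⟫_ℂ := ContinuousLinearMap.adjoint_inner_right T (T (S x)) x
          _ = ⟪(T ^ 2 * S) x, x⟫_ℂ := by rw [pow_two]; rfl
      have e3 : ⟪x, S x⟫_ℂ = ⟪T x, x⟫_ℂ := ContinuousLinearMap.adjoint_inner_right T x x
      rw [e1, e2, e3] at bz
      have hnm : ‖⟪S x, S x⟫_ℂ * ⟪T x, x⟫_ℂ‖ = ‖⟪T x, x⟫_ℂ‖ * ‖S x‖ ^ 2 := by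
        rw [norm_mul, norm_inner_self]; ring
      rw [hnm] at bz
      have hw : ‖⟪(T ^ 2 * S) x, x⟫_ℂ‖ ≤ numRadius (T ^ 2 * S) := le_numRadius _ hx
      calc ‖⟪T x, x⟫_ℂ‖ ^ 3 ≤ ‖⟪T x, x⟫_ℂ‖ * ‖S x‖ ^ 2 := by nlinarith [mul_le_mul hr2 hr2 hr0 (norm_nonneg (S x)), hr0, hr2]
        _ ≤ (‖(T * S) x‖ * ‖S x‖ + ‖⟪(T ^ 2 * S) x, x⟫_ℂ‖) / 2 := bz
        _ ≤ (numRadius (T ^ 2 * S) + ‖T‖ ^ 3) / 2 := by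
            nlinarith [norm_nonneg ((T * S) x), norm_nonneg (S x), norm_nonneg T]
    -- Case 3 : S T^2
    have c3 : ‖⟪T x, x⟫_ℂ‖ ^ 3 ≤ (numRadius (S * T ^ 2) + ‖T‖ ^ 3) / 2 := by
      have bz := buzano (T x) ((S * T) x) x hx
      have e1 : ⟪x, (S * T) x⟫_ℂ = ⟪T x, T x⟫_ℂ := by
        calc ⟪x, (S * T) x⟫_ℂ = ⟪x, S (T x)⟫_ℂ := rfl
          _ = ⟪T x, T x⟫_ℂ := ContinuousLinearMap.adjoint_inner_right T x (T x)
      have e2 : ⟪T x, (S * T) x⟫_ℂ = ⟪(S * T ^ 2) x, x⟫_ℂ := by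
        calc ⟪T x, (S * T) x⟫_ℂ = ⟪T x, S (T x)⟫_ℂ := rfl
          _ = ⟪T (T x), T x⟫_ℂ := ContinuousLinearMap.adjoint_inner_right T (T x) (T x)
          _ = ⟪S (T (T x)), x⟫_ℂ := by
              rw [ContinuousLinearMap.adjoint_inner_left T x (T (T x))]
          _ = ⟪(S * T ^ 2) x, x⟫_ℂ := by rw [pow_two]; rfl
      rw [e1, e2] at bz
      have hnm : ‖⟪T x, x⟫_ℂ * ⟪T x, T x⟫_ℂ‖ = ‖⟪T x, x⟫_ℂ‖ * ‖T x‖ ^ 2 := by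
        rw [norm_mul, norm_inner_self]
      rw [hnm] at bz
      have hw : ‖⟪(S * T ^ 2) x, x⟫_ℂ‖ ≤ numRadius (S * T ^ 2) := le_numRadius _ hx
      calc ‖⟪T x, x⟫_ℂ‖ ^ 3 ≤ ‖⟪T x, x⟫_ℂ‖ * ‖T x‖ ^ 2 := by nlinarith [mul_le_mul hr1 hr1 hr0 (norm_nonneg (T x)), hr0, hr1]
        _ ≤ (‖T x‖ * ‖(S * T) x‖ + ‖⟪(S * T ^ 2) x, x⟫_ℂ‖) / 2 := bz
        _ ≤ (numRadius (S * T ^ 2) + ‖T‖ ^ 3) / 2 := by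
            nlinarith [norm_nonneg (T x), norm_nonneg ((S * T) x), norm_nonneg T]
    -- combine via min
    rcases le_total (numRadius (T * S * T)) (min (numRadius (T ^ 2 * S)) (numRadius (S * T ^ 2))) with h | h
    · rw [hB, min_eq_left h]; linarith
    · rw [hB, min_eq_right h]
      rcases le_total (numRadius (T ^ 2 * S)) (numRadius (S * T ^ 2)) with h' | h'
      · rw [min_eq_left h']; linarith
      · rw [min_eq_right h']; linarith
  -- take sup
  set c : ℝ := B ^ ((1 : ℝ) / 3) with hc
  have hc0 : 0 ≤ c := Real.rpow_nonneg hB0 _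
  have hc3 : c ^ 3 = B := by
    rw [hc, ← Real.rpow_natCast (B ^ ((1:ℝ)/3)) 3, ← Real.rpow_mul hB0]
    norm_num
  have hle : numRadius T ≤ c := by
    apply numRadius_le T hc0
    intro x hx
    have h := main x hx
    rw [← hc3] at h
    exact (pow_le_pow_iff_left₀ (norm_nonneg _) hc0 (by norm_num)).mp h
  calc (numRadius T) ^ 3 ≤ c ^ 3 := pow_le_pow_left₀ (numRadius_nonneg T) hle 3
    _ = B := hc3
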